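/- Let n ≥ 1, let H : ℝⁿ × ℝⁿ → ℝ be continuous, and fix p ∈ ℝⁿ, λ ∈ ℝ, and σ > 0. Suppose v ∈ C²(ℝⁿ) is ℤⁿ-periodic and satisfies H(y, p + Dv(y)) = λ + Δv(y) for all y ∈ ℝⁿ, and suppose v^σ ∈ C²(ℝⁿ) is ℤⁿ-periodic and satisfies σ v^σ(y) + H(y, p + Dv^σ(y)) = Δv^σ(y) for all y ∈ ℝⁿ. Then sup_{y∈ℝⁿ} | σ v^σ(y) + λ | ≤ 2σ sup_{y∈ℝⁿ} |v(y)|. -/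

import Mathlib

noncomputable section

/-- The Laplacian of `f : ℝⁿ → ℝ` at `x`: the sum of the second directional derivatives
along the standard orthonormal basis vectors. -/
def lap {n : ℕ} (f : EuclideanSpace ℝ (Fin n) → ℝ) (x : EuclideanSpace ℝ (Fin n)) : ℝ :=
  ∑ i, iteratedFDeriv ℝ 2 f x ![EuclideanSpace.single i 1, EuclideanSpace.single i 1]

/-- `v : ℝⁿ → ℝ` is `ℤⁿ`-periodic. -/
def IsZnPeriodic {n : ℕ} (v : EuclideanSpace ℝ (Fin n) → ℝ) : Prop :=
  ∀ (y : EuclideanSpace ℝ (Fin n)) (k : Fin n → ℤ),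
    v (y + (show EuclideanSpace ℝ (Fin n) from WithLp.toLp 2 fun i => (k i : ℝ))) = v y

/-! At a maximum point of `v^σ - v` the two functions have the same gradient and
`Δv^σ ≤ Δv`, so comparing the two equations there gives `σ v^σ + λ ≤ 0`; symmetrically
`σ v^σ + λ ≥ 0` at a minimum point. Both extrema exist because the functions are periodic,
and moving from the extremum to an arbitrary point changes `σ v^σ` by at most
`σ (max v - min v) ≤ 2σ ‖v‖_∞`. -/

open Filter Topology Set

/-- If `f''(x₀) > 0` at a local maximum, the second derivative test makes `x₀` also a local
minimum, so `f` is locally constant and `f''(x₀) = 0`. -/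
lemma IsLocalMax.deriv_deriv_nonpos {f : ℝ → ℝ} {x₀ : ℝ} (h : IsLocalMax f x₀)
    (hc : ContinuousAt f x₀) : deriv (deriv f) x₀ ≤ 0 := by
  by_contra! hpos
  have hconst : f =ᶠ[𝓝 x₀] fun _ => f x₀ :=
    ((isLocalMin_of_deriv_deriv_pos hpos h.deriv_eq_zero hc).and h).mono
      fun _ hx => le_antisymm hx.2 hx.1
  have hderiv : deriv f =ᶠ[𝓝 x₀] fun _ => 0 :=
    hconst.eventuallyEq_nhds.mono fun _ hy => hy.deriv_eq.trans (deriv_const _ _)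
  simp [hderiv.deriv_eq] at hpos

section LineRestriction

variable {E F : Type*} [NormedAddCommGroup E] [NormedSpace ℝ E]
  [NormedAddCommGroup F] [NormedSpace ℝ F]

lemma deriv_deriv_comp_add_smul {f : E → F} (hf : ContDiff ℝ 2 f) (x u : E) :
    deriv (deriv fun t : ℝ => f (x + t • u)) 0 = iteratedFDeriv ℝ 2 f x ![u, u] := by
  have hline : ∀ t : ℝ, HasDerivAt (fun s : ℝ => x + s • u) u t := fun t => by
    simpa using ((hasDerivAt_id t).smul_const u).const_add x
  have hderiv : deriv (fun t : ℝ => f (x + t • u)) = fun t => fderiv ℝ f (x + t • u) u :=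
    funext fun t => ((hf.differentiable (by norm_num) _).hasFDerivAt.comp_hasDerivAt t
      (hline t)).deriv
  have hf' : Differentiable ℝ (fderiv ℝ f) :=
    (hf.fderiv_right (m := 1) (by norm_num)).differentiable (by norm_num)
  have hsecond : HasDerivAt (fun t : ℝ => fderiv ℝ f (x + t • u) u)
      (fderiv ℝ (fderiv ℝ f) x u u) 0 := by
    have := (hf' (x + (0 : ℝ) • u)).hasFDerivAt.comp_hasDerivAt 0 (hline 0)
    simpa using this.clm_apply (hasDerivAt_const (0 : ℝ) u)
  rw [hderiv, hsecond.deriv, iteratedFDeriv_two_apply]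
  rfl

lemma IsLocalMax.iteratedFDeriv_two_nonpos {f : E → ℝ} {x : E} (hf : ContDiff ℝ 2 f)
    (h : IsLocalMax f x) (u : E) : iteratedFDeriv ℝ 2 f x ![u, u] ≤ 0 := by
  have hline : Continuous fun t : ℝ => x + t • u := by fun_prop
  rw [← deriv_deriv_comp_add_smul hf]
  refine IsLocalMax.deriv_deriv_nonpos ?_ (hf.continuous.comp hline).continuousAt
  exact IsLocalMax.comp_continuous (by simpa using h) hline.continuousAt

end LineRestriction

section Laplacian

variable {n : ℕ} {f g : EuclideanSpace ℝ (Fin n) → ℝ} {x : EuclideanSpace ℝ (Fin n)}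

lemma lap_sub (hf : ContDiff ℝ 2 f) (hg : ContDiff ℝ 2 g) :
    lap (f - g) x = lap f x - lap g x := by
  simp [lap, iteratedFDeriv_sub_apply hf.contDiffAt hg.contDiffAt, Finset.sum_sub_distrib]

lemma IsLocalMax.lap_nonpos (hf : ContDiff ℝ 2 f) (h : IsLocalMax f x) : lap f x ≤ 0 :=
  Finset.sum_nonpos fun _ _ => h.iteratedFDeriv_two_nonpos hf _

lemma IsLocalMax.lap_le_of_sub (hf : ContDiff ℝ 2 f) (hg : ContDiff ℝ 2 g)
    (h : IsLocalMax (f - g) x) : lap f x ≤ lap g x := by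
  have := h.lap_nonpos (f := f - g) (hf.sub hg)
  rw [lap_sub hf hg] at this
  linarith

lemma IsLocalMax.gradient_eq_of_sub (hf : DifferentiableAt ℝ f x) (hg : DifferentiableAt ℝ g x)
    (h : IsLocalMax (f - g) x) : gradient f x = gradient g x := by
  have hzero := h.fderiv_eq_zero
  rw [fderiv_sub hf hg, sub_eq_zero] at hzero
  simp only [gradient, hzero]

end Laplacian

namespace IsZnPeriodic

variable {n : ℕ} {f g : EuclideanSpace ℝ (Fin n) → ℝ}

lemma sub (hf : IsZnPeriodic f) (hg : IsZnPeriodic g) : IsZnPeriodic (f - g) :=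
  fun y k => by simp only [Pi.sub_apply, hf y k, hg y k]

lemma comp (hf : IsZnPeriodic f) (φ : ℝ → ℝ) : IsZnPeriodic (φ ∘ f) :=
  fun y k => by simp only [Function.comp_apply, hf y k]

/-- Translating by `-⌊y⌋` moves `y` into the unit cube. -/
lemma exists_mem_unitCube (hf : IsZnPeriodic f) (y : EuclideanSpace ℝ (Fin n)) :
    ∃ z ∈ WithLp.toLp 2 '' Icc (0 : Fin n → ℝ) 1, f z = f y := by
  refine ⟨_, ⟨fun i => Int.fract (y i), ?_, rfl⟩, ?_⟩
  · exact ⟨fun i => Int.fract_nonneg _, fun i => (Int.fract_lt_one _).le⟩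
  · convert hf y fun i => -⌊y i⌋ using 2
    ext i
    simp [Int.fract, sub_eq_add_neg]

lemma exists_forall_le (hf : IsZnPeriodic f) (hc : Continuous f) :
    ∃ y₀, ∀ y, f y ≤ f y₀ := by
  have hK : IsCompact (WithLp.toLp 2 '' Icc (0 : Fin n → ℝ) 1) :=
    isCompact_Icc.image (PiLp.continuous_toLp 2 _)
  obtain ⟨y₀, -, hy₀⟩ := hK.exists_isMaxOn ⟨_, mem_image_of_mem _ (left_mem_Icc.2 zero_le_one)⟩
    hc.continuousOn
  refine ⟨y₀, fun y => ?_⟩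
  obtain ⟨z, hz, hzy⟩ := hf.exists_mem_unitCube y
  exact hzy ▸ hy₀ hz

lemma bddAbove_range (hf : IsZnPeriodic f) (hc : Continuous f) : BddAbove (range f) := by
  obtain ⟨y₀, hy₀⟩ := hf.exists_forall_le hc
  exact ⟨f y₀, forall_mem_range.2 hy₀⟩

end IsZnPeriodic

theorem statement13_general
    (n : ℕ)
    (H : EuclideanSpace ℝ (Fin n) → EuclideanSpace ℝ (Fin n) → ℝ)
    (p : EuclideanSpace ℝ (Fin n)) (lam σ : ℝ) (hσ : 0 < σ)
    (v : EuclideanSpace ℝ (Fin n) → ℝ) (hv : ContDiff ℝ 2 v) (hv_per : IsZnPeriodic v)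
    (hv_eq : ∀ y : EuclideanSpace ℝ (Fin n), H y (p + gradient v y) = lam + lap v y)
    (vσ : EuclideanSpace ℝ (Fin n) → ℝ) (hvσ : ContDiff ℝ 2 vσ)
    (hvσ_per : IsZnPeriodic vσ)
    (hvσ_eq : ∀ y : EuclideanSpace ℝ (Fin n),
      σ * vσ y + H y (p + gradient vσ y) = lap vσ y) :
    (⨆ y : EuclideanSpace ℝ (Fin n), |σ * vσ y + lam|)
      ≤ 2 * σ * ⨆ y : EuclideanSpace ℝ (Fin n), |v y| := by
  have hd := hv.differentiable (by norm_num)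
  have hdσ := hvσ.differentiable (by norm_num)
  obtain ⟨yM, hyM⟩ := (hvσ_per.sub hv_per).exists_forall_le (hvσ.continuous.sub hv.continuous)
  obtain ⟨ym, hym⟩ := (hv_per.sub hvσ_per).exists_forall_le (hv.continuous.sub hvσ.continuous)
  have hmax : IsLocalMax (vσ - v) yM := Eventually.of_forall hyM
  have hmin : IsLocalMax (v - vσ) ym := Eventually.of_forall hym
  simp only [Pi.sub_apply] at hyM hym
  have hupper : σ * vσ yM + lam ≤ 0 := by
    have := hvσ_eq yM
    rw [hmax.gradient_eq_of_sub (hdσ yM) (hd yM), hv_eq] at this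
    linarith [hmax.lap_le_of_sub hvσ hv]
  have hlower : 0 ≤ σ * vσ ym + lam := by
    have := hvσ_eq ym
    rw [← hmin.gradient_eq_of_sub (hd ym) (hdσ ym), hv_eq] at this
    linarith [hmin.lap_le_of_sub hv hvσ]
  have hosc : ∀ y y', v y - v y' ≤ 2 * ⨆ y, |v y| := fun y y' => by
    have hS : ∀ y, |v y| ≤ ⨆ y, |v y| :=
      le_ciSup ((hv_per.comp abs).bddAbove_range (continuous_abs.comp hv.continuous))
    linarith [abs_le.1 (hS y), abs_le.1 (hS y')]
  refine ciSup_le fun y => abs_le.2 ⟨?_, ?_⟩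
  · linarith [mul_le_mul_of_nonneg_left (hym y) hσ.le,
      mul_le_mul_of_nonneg_left (hosc ym y) hσ.le]
  · linarith [mul_le_mul_of_nonneg_left (hyM y) hσ.le,
      mul_le_mul_of_nonneg_left (hosc y yM) hσ.le]

/-- Let `H : ℝⁿ × ℝⁿ → ℝ` be continuous, `p ∈ ℝⁿ`, `λ ∈ ℝ`, `σ > 0`.
If `v ∈ C²` is `ℤⁿ`-periodic with `H(y, p + Dv) = λ + Δv`, and `v^σ ∈ C²` is
`ℤⁿ`-periodic with `σ v^σ + H(y, p + Dv^σ) = Δv^σ`, then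
`sup_y |σ v^σ(y) + λ| ≤ 2σ sup_y |v(y)|`. -/
theorem statement13
    (n : ℕ) (hn : 0 < n)
    (H : EuclideanSpace ℝ (Fin n) → EuclideanSpace ℝ (Fin n) → ℝ)
    (hH : Continuous (fun q : EuclideanSpace ℝ (Fin n) × EuclideanSpace ℝ (Fin n) =>
      H q.1 q.2))
    (p : EuclideanSpace ℝ (Fin n)) (lam σ : ℝ) (hσ : 0 < σ)
    (v : EuclideanSpace ℝ (Fin n) → ℝ) (hv : ContDiff ℝ 2 v) (hv_per : IsZnPeriodic v)
    (hv_eq : ∀ y : EuclideanSpace ℝ (Fin n), H y (p + gradient v y) = lam + lap v y)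
    (vσ : EuclideanSpace ℝ (Fin n) → ℝ) (hvσ : ContDiff ℝ 2 vσ)
    (hvσ_per : IsZnPeriodic vσ)
    (hvσ_eq : ∀ y : EuclideanSpace ℝ (Fin n),
      σ * vσ y + H y (p + gradient vσ y) = lap vσ y) :
    (⨆ y : EuclideanSpace ℝ (Fin n), |σ * vσ y + lam|)
      ≤ 2 * σ * ⨆ y : EuclideanSpace ℝ (Fin n), |v y| :=
  statement13_general n H p lam σ hσ v hv hv_per hv_eq vσ hvσ hvσ_per hvσ_eq
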